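/- Let d ≥ 1, let Q_1, …, Q_d be real numbers, and let N_1, …, N_d be positive real numbers, and for real w let f(w) = (Σ_{j=1}^d N_j e^{w Q_j} Q_j) / (Σ_{j=1}^d N_j e^{w Q_j}) denote the Softmax MCTS backup value. Then for all w ≥ 0, (Σ_j N_j Q_j)/(Σ_j N_j) ≤ f(w) ≤ max_{1 ≤ j ≤ d} Q_j; i.e., for nonnegative w the softmax backup lies between the visit-weighted average of the children's values and the value of the best child. -/
import Mathlib

/-- Weighted Chebyshev-type inequality for monovarying pairs. -/
lemma cheb_aux {ι : Type*} (s : Finset ι) (a x y : ι → ℝ)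
    (ha : ∀ i ∈ s, 0 ≤ a i)
    (hxy : ∀ i ∈ s, ∀ j ∈ s, 0 ≤ (x i - x j) * (y i - y j)) :
    (∑ i ∈ s, a i * x i) * (∑ i ∈ s, a i * y i) ≤
      (∑ i ∈ s, a i * x i * y i) * (∑ i ∈ s, a i) := by
  have expand :
      ∑ i ∈ s, ∑ j ∈ s, a i * a j * ((x i - x j) * (y i - y j))
        = (∑ i ∈ s, a i * x i * y i) * (∑ j ∈ s, a j)
          - (∑ i ∈ s, a i * x i) * (∑ j ∈ s, a j * y j)
          - (∑ i ∈ s, a i * y i) * (∑ j ∈ s, a j * x j)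
          + (∑ i ∈ s, a i) * (∑ j ∈ s, a j * x j * y j) := by
    simp only [Finset.sum_mul_sum]
    rw [← Finset.sum_sub_distrib, ← Finset.sum_sub_distrib, ← Finset.sum_add_distrib]
    refine Finset.sum_congr rfl fun i _ => ?_
    rw [← Finset.sum_sub_distrib, ← Finset.sum_sub_distrib, ← Finset.sum_add_distrib]
    refine Finset.sum_congr rfl fun j _ => ?_
    ring
  have hnn : 0 ≤ ∑ i ∈ s, ∑ j ∈ s, a i * a j * ((x i - x j) * (y i - y j)) := by
    refine Finset.sum_nonneg fun i hi => Finset.sum_nonneg fun j hj => ?_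
    exact mul_nonneg (mul_nonneg (ha i hi) (ha j hj)) (hxy i hi j hj)
  rw [expand] at hnn
  nlinarith [hnn]

/-- For nonnegative inverse temperature `w`, the Softmax MCTS backup value lies between
the visit-weighted average of the children's values and the value of the best child:
`(∑ j, N j * Q j)/(∑ j, N j) ≤ f w ≤ max_j Q j`. -/
theorem softmax_backup_between_avg_and_max
    (d : ℕ) (hd : 1 ≤ d) (Q N : Fin d → ℝ) (hN : ∀ j, 0 < N j) :
    ∀ w : ℝ, 0 ≤ w →
      (∑ j : Fin d, N j * Q j) / (∑ j : Fin d, N j) ≤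
        (∑ j : Fin d, N j * Real.exp (w * Q j) * Q j) /
          (∑ j : Fin d, N j * Real.exp (w * Q j)) ∧
      (∑ j : Fin d, N j * Real.exp (w * Q j) * Q j) /
          (∑ j : Fin d, N j * Real.exp (w * Q j)) ≤
        Finset.univ.sup' (Finset.univ_nonempty_iff.mpr ⟨⟨0, hd⟩⟩) Q := by
  intro w hw
  have hne : (Finset.univ : Finset (Fin d)).Nonempty := ⟨⟨0, hd⟩, Finset.mem_univ _⟩
  have hS0 : 0 < ∑ j : Fin d, N j :=
    Finset.sum_pos (fun j _ => hN j) hne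
  have hSw : 0 < ∑ j : Fin d, N j * Real.exp (w * Q j) :=
    Finset.sum_pos (fun j _ => mul_pos (hN j) (Real.exp_pos _)) hne
  constructor
  · rw [div_le_div_iff₀ hS0 hSw]
    have := cheb_aux Finset.univ N Q (fun j => Real.exp (w * Q j))
      (fun i _ => (hN i).le)
      (fun i _ j _ => by
        rcases le_total (Q i) (Q j) with h | h
        · have : Real.exp (w * Q i) ≤ Real.exp (w * Q j) :=
            Real.exp_le_exp.mpr (mul_le_mul_of_nonneg_left h hw)
          nlinarith
        · have : Real.exp (w * Q j) ≤ Real.exp (w * Q i) :=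
            Real.exp_le_exp.mpr (mul_le_mul_of_nonneg_left h hw)
          nlinarith)
    calc (∑ j : Fin d, N j * Q j) * (∑ j : Fin d, N j * Real.exp (w * Q j))
        ≤ (∑ j : Fin d, N j * Q j * Real.exp (w * Q j)) * (∑ j : Fin d, N j) := this
      _ = (∑ j : Fin d, N j * Real.exp (w * Q j) * Q j) * (∑ j : Fin d, N j) := by
          congr 1; exact Finset.sum_congr rfl fun j _ => by ring
  · rw [div_le_iff₀ hSw]
    set M := Finset.univ.sup' (Finset.univ_nonempty_iff.mpr ⟨⟨0, hd⟩⟩) Q with hM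
    calc (∑ j : Fin d, N j * Real.exp (w * Q j) * Q j)
        ≤ ∑ j : Fin d, N j * Real.exp (w * Q j) * M := by
          refine Finset.sum_le_sum fun j _ => ?_
          exact mul_le_mul_of_nonneg_left (Finset.le_sup' Q (Finset.mem_univ j))
            (mul_pos (hN j) (Real.exp_pos _)).le
      _ = M * (∑ j : Fin d, N j * Real.exp (w * Q j)) := by
          rw [Finset.mul_sum]; exact Finset.sum_congr rfl fun j _ => by ring
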